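/- arXiv:2104.01434 — 2 statements merged into one kernel-verified Lean document; each statement's English description precedes it below -/
import Mathlib

section
/- Let p be a prime, q = p^m, and f = X^q - X ∈ F_q[X]. For t transcendental over F_q, the field F_q(x), where x is a root of f(X) - t, is a Galois extension of F_q(t) of degree q, with Galois group isomorphic to (Z/pZ)^m (every element has order dividing p). -/
open Polynomial

noncomputable def swapHom (F : Type) [CommSemiring F] :
    Polynomial (Polynomial F) →+* Polynomial (Polynomial F) :=
  eval₂RingHom (eval₂RingHom (C.comp C) X) (C X)

@[simp] lemma swapHom_C_C (F : Type) [CommSemiring F] (a : F) :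
    swapHom F (C (C a)) = C (C a) := by
  simp [swapHom, coe_eval₂RingHom]

@[simp] lemma swapHom_C_X (F : Type) [CommSemiring F] :
    swapHom F (C X) = X := by
  simp [swapHom, coe_eval₂RingHom]

@[simp] lemma swapHom_X (F : Type) [CommSemiring F] :
    swapHom F (X : Polynomial (Polynomial F)) = C X := by
  simp [swapHom, coe_eval₂RingHom]

lemma swapHom_comp_self (F : Type) [CommSemiring F] :
    (swapHom F).comp (swapHom F) = RingHom.id _ := by
  apply ringHom_ext'
  · apply ringHom_ext'
    · exact RingHom.ext fun a => by simp [RingHom.comp_apply]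
    · simp [RingHom.comp_apply]
  · simp [RingHom.comp_apply]

noncomputable def swapEquiv (F : Type) [CommSemiring F] :
    Polynomial (Polynomial F) ≃+* Polynomial (Polynomial F) :=
  RingEquiv.ofRingHom (swapHom F) (swapHom F) (swapHom_comp_self F) (swapHom_comp_self F)

set_option synthInstance.maxHeartbeats 1000000 in
set_option maxHeartbeats 1000000 in
theorem artin_schreier_like_galois
    (p m : ℕ) (hp : p.Prime) (hm : 1 ≤ m)
    (F : Type) [Field F] [Fintype F] (hF : Fintype.card F = p ^ m)
    (L : Type) [Field L] [Algebra (RatFunc F) L]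
    (x : L)
    (hx : aeval x ((X : Polynomial (RatFunc F)) ^ (p ^ m) - X - C RatFunc.X) = 0)
    (hgen : Algebra.adjoin (RatFunc F) {x} = ⊤) :
    IsGalois (RatFunc F) L ∧
    Module.finrank (RatFunc F) L = p ^ m ∧
    (∀ σ : L ≃ₐ[RatFunc F] L, σ ^ p = 1) ∧
    Nonempty ((L ≃ₐ[RatFunc F] L) ≃* (Fin m → Multiplicative (ZMod p))) := by
  classical
  haveI : Fact p.Prime := ⟨hp⟩
  set q := p ^ m with hqdef
  have hq2 : 2 ≤ q := le_trans hp.two_le (Nat.le_self_pow (by omega) p)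
  have h1q : (1 : ℕ) < q := by omega
  -- characteristic p
  have hqF : (q : F) = 0 := by rw [← hF]; exact FiniteField.cast_card_eq_zero F
  have hcharF : CharP F p := by
    have h1 : ringChar F ∣ q := (ringChar.spec F q).mp hqF
    rw [hqdef] at h1
    have h2 : (ringChar F).Prime := by
      haveI := ringChar.charP F
      exact CharP.char_is_prime F (ringChar F)
    have h3 := h2.dvd_of_dvd_pow h1
    have : ringChar F = p := (Nat.prime_dvd_prime_iff_eq h2 hp).mp h3
    exact this ▸ ringChar.charP F
  haveI := hcharF
  have hcharK : CharP (RatFunc F) p := charP_of_injective_ringHom (algebraMap F (RatFunc F)).injective p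
  haveI := hcharK
  have hcharL : CharP L p := charP_of_injective_ringHom (algebraMap (RatFunc F) L).injective p
  haveI := hcharL
  -- the polynomial
  set g : (RatFunc F)[X] := (X : (RatFunc F)[X]) ^ q - X - C RatFunc.X with hgdef
  set g₀ : (Polynomial F)[X] := (X : (Polynomial F)[X]) ^ q - X - C X with hg₀def
  have hdeglow : ((X : (Polynomial F)[X]) + C X).degree < ((X : (Polynomial F)[X]) ^ q).degree := by
    rw [degree_X_pow]
    calc ((X : (Polynomial F)[X]) + C X).degree ≤ 1 := by
          apply le_trans (degree_add_le _ _)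
          simp [degree_X, degree_C_le]
      _ < (q : WithBot ℕ) := by exact_mod_cast h1q
  have hg₀eq : g₀ = (X : (Polynomial F)[X]) ^ q - ((X : (Polynomial F)[X]) + C X) := by
    ring
  have hg₀monic : g₀.Monic := by
    rw [hg₀eq]
    exact (monic_X_pow q).sub_of_left hdeglow
  have hg₀degree : g₀.degree = q := by
    rw [hg₀eq, degree_sub_eq_left_of_degree_lt hdeglow, degree_X_pow]
  have hg₀deg : g₀.natDegree = q := natDegree_eq_of_degree_eq_some hg₀degree
  -- irreducibility of g₀ via the swap
  have hswap : swapEquiv F g₀ = C ((X : Polynomial F) ^ q - X) - X := by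
    show swapHom F g₀ = _
    simp [hg₀def, map_sub, map_pow, C_sub, C_pow]
  have hg₀irr : Irreducible g₀ := by
    rw [← MulEquiv.irreducible_iff (swapEquiv F).toMulEquiv]
    show Irreducible (swapEquiv F g₀)
    rw [hswap, ← neg_sub]
    exact ((Associated.refl _).neg_right).irreducible (irreducible_X_sub_C _)
  -- map to RatFunc
  have hmap : g₀.map (algebraMap (Polynomial F) (RatFunc F)) = g := by
    rw [hg₀def, Polynomial.map_sub, Polynomial.map_sub, Polynomial.map_pow, map_X, map_C]
    rw [show (algebraMap (Polynomial F) (RatFunc F)) X = RatFunc.X from RatFunc.algebraMap_X]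
  have hgirr : Irreducible g := by
    rw [← hmap]
    exact (hg₀monic.irreducible_iff_irreducible_map_fraction_map).mp hg₀irr
  have hgmonic : g.Monic := by rw [← hmap]; exact hg₀monic.map _
  have hgdeg : g.natDegree = q := by
    rw [← hmap, hg₀monic.natDegree_map, hg₀deg]
  have hgne : g ≠ 0 := hgmonic.ne_zero
  -- minimal polynomial
  have hmin : g = minpoly (RatFunc F) x := minpoly.eq_of_irreducible_of_monic hgirr hx hgmonic
  have hint : IsIntegral (RatFunc F) x := ⟨g, hgmonic, hx⟩
  -- the embedding of F
  set ι : F →+* L := (algebraMap (RatFunc F) L).comp (algebraMap F (RatFunc F)) with hιdef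
  have hιinj : Function.Injective ι := ι.injective
  have hpowcard : ∀ α : F, α ^ q = α := by
    intro α; rw [← hF]; exact FiniteField.pow_card α
  have hroot : ∀ α : F, aeval (x + ι α) g = 0 := by
    intro α
    have hc : (ι α) ^ q = ι α := by
      rw [← map_pow, hpowcard]
    have hxq : x ^ q - x - algebraMap (RatFunc F) L RatFunc.X = 0 := by
      simpa [hgdef, map_sub, map_pow, aeval_X, aeval_C] using hx
    have hfrob : (x + ι α) ^ q = x ^ q + (ι α) ^ q := by
      rw [hqdef]; exact add_pow_char_pow x (ι α) p m
    have : aeval (x + ι α) g = (x + ι α) ^ q - (x + ι α) - algebraMap (RatFunc F) L RatFunc.X := by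
      simp [hgdef, map_sub, map_pow, aeval_X, aeval_C]
    rw [this, hfrob, hc]
    linear_combination hxq
  -- roots of the mapped polynomial
  set gm : L[X] := g.map (algebraMap (RatFunc F) L) with hgmdef
  have hgmne : gm ≠ 0 := (hgmonic.map _).ne_zero
  have hgmdeg : gm.natDegree = q := by rw [hgmdef, hgmonic.natDegree_map, hgdeg]
  have hinj2 : Function.Injective (fun α : F => x + ι α) := by
    intro a b h
    exact hιinj (by simpa using h)
  set S : Finset L := Finset.univ.image (fun α : F => x + ι α) with hSdef
  have hScard : S.card = q := by
    rw [hSdef, Finset.card_image_of_injective _ hinj2, Finset.card_univ, hF]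
  have hSsub : S ⊆ gm.roots.toFinset := by
    intro y hy
    rw [hSdef] at hy
    obtain ⟨α, -, rfl⟩ := Finset.mem_image.mp hy
    rw [Multiset.mem_toFinset, mem_roots hgmne]
    show IsRoot _ _
    rw [hgmdef, IsRoot, eval_map, ← aeval_def]
    exact hroot α
  have hcard1 : q ≤ Multiset.card gm.roots := by
    calc q = S.card := hScard.symm
      _ ≤ gm.roots.toFinset.card := Finset.card_le_card hSsub
      _ ≤ Multiset.card gm.roots := Multiset.toFinset_card_le _
  have hcard2 : Multiset.card gm.roots ≤ q := by
    rw [← hgmdeg]; exact gm.card_roots'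
  have hcardeq : Multiset.card gm.roots = q := le_antisymm hcard2 hcard1
  -- splitting
  have hsplits : Splits (g.map (algebraMap (RatFunc F) L)) := by
    rw [← hgmdef, splits_iff_card_roots, hcardeq, hgmdeg]
  have hrootS : S = gm.roots.toFinset := by
    apply Finset.eq_of_subset_of_card_le hSsub
    rw [hScard]
    calc gm.roots.toFinset.card ≤ Multiset.card gm.roots := Multiset.toFinset_card_le _
      _ ≤ q := hcard2
  have hrootmem : ∀ y : L, aeval y g = 0 → ∃ α : F, y = x + ι α := by
    intro y hy
    have hmem : y ∈ gm.roots.toFinset := by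
      rw [Multiset.mem_toFinset, mem_roots hgmne]
      show IsRoot _ _
      rw [hgmdef, IsRoot, eval_map, ← aeval_def]
      exact hy
    rw [← hrootS, hSdef] at hmem
    obtain ⟨α, -, h⟩ := Finset.mem_image.mp hmem
    exact ⟨α, h.symm⟩
  haveI hsf : IsSplittingField (RatFunc F) L g := by
    constructor
    · exact hsplits
    · rw [eq_top_iff, ← hgen]
      apply Algebra.adjoin_mono
      intro y hy
      rw [Set.mem_singleton_iff] at hy
      subst hy
      rw [mem_rootSet]
      exact ⟨hgne, hx⟩
  -- separability
  have hqK : (q : (RatFunc F)) = 0 := by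
    rw [← map_natCast (algebraMap F (RatFunc F)) q, hqF, map_zero]
  have hderiv : derivative g = -1 := by
    rw [hgdef]
    simp [derivative_X_pow, hqK]
  have hsep : g.Separable := by
    rw [Polynomial.separable_def, hderiv]
    exact (isCoprime_one_right).neg_right
  haveI hgal : IsGalois (RatFunc F) L := IsGalois.of_separable_splitting_field hsep
  haveI hfd : FiniteDimensional (RatFunc F) L := IsSplittingField.finiteDimensional L g
  -- finrank
  have hfinrank : Module.finrank (RatFunc F) L = q := by
    have htopIF : IntermediateField.adjoin (RatFunc F) {x} = ⊤ := by
      apply IntermediateField.toSubalgebra_injective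
      rw [IntermediateField.adjoin_simple_toSubalgebra_of_isAlgebraic hint.isAlgebraic, hgen]
      rfl
    have h1 : Module.finrank (RatFunc F) (IntermediateField.adjoin (RatFunc F) {x}) = q := by
      rw [IntermediateField.adjoin.finrank hint, ← hmin, hgdeg]
    rw [htopIF] at h1
    rw [← h1]
    exact (IntermediateField.topEquiv (F := (RatFunc F)) (E := L)).toLinearEquiv.finrank_eq.symm
  -- the Galois group
  have hσroot : ∀ σ : L ≃ₐ[(RatFunc F)] L, ∃ α : F, σ x = x + ι α := by
    intro σ
    apply hrootmem
    rw [show σ x = σ.toAlgHom x from rfl, Polynomial.aeval_algHom_apply, hx, map_zero]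
  classical
  set e : (L ≃ₐ[(RatFunc F)] L) → F := fun σ => Classical.choose (hσroot σ) with hedef
  have he : ∀ σ : L ≃ₐ[(RatFunc F)] L, σ x = x + ι (e σ) := fun σ => Classical.choose_spec (hσroot σ)
  have hext : ∀ σ τ : L ≃ₐ[(RatFunc F)] L, σ x = τ x → σ = τ := by
    intro σ τ h
    have hle : Algebra.adjoin (RatFunc F) {x} ≤ AlgHom.equalizer σ.toAlgHom τ.toAlgHom := by
      apply Algebra.adjoin_le
      intro y hy
      rw [Set.mem_singleton_iff] at hy
      subst hy
      exact h
    rw [hgen] at hle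
    ext y
    exact hle (Algebra.mem_top (R := (RatFunc F)) (A := L))
  have hιcomm : ∀ (σ : L ≃ₐ[(RatFunc F)] L) (α : F), σ (ι α) = ι α := by
    intro σ α
    rw [hιdef]
    exact σ.commutes _
  have hemul : ∀ σ τ : L ≃ₐ[(RatFunc F)] L, e (σ * τ) = e σ + e τ := by
    intro σ τ
    apply hιinj
    have h1 : (σ * τ) x = x + ι (e (σ * τ)) := he _
    have h2 : (σ * τ) x = x + ι (e σ) + ι (e τ) := by
      show σ (τ x) = _
      rw [he τ, map_add, he σ, hιcomm]
    rw [h1] at h2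
    rw [map_add]
    linear_combination h2
  have heinj : Function.Injective e := by
    intro σ τ h
    apply hext
    rw [he σ, he τ, h]
  have he1 : e 1 = 0 := by
    apply hιinj
    have h1 : (1 : L ≃ₐ[(RatFunc F)] L) x = x + ι (e 1) := he 1
    rw [map_zero]
    simpa using h1.symm
  have hepow : ∀ (σ : L ≃ₐ[(RatFunc F)] L) (n : ℕ), e (σ ^ n) = n • e σ := by
    intro σ n
    induction n with
    | zero => simpa using he1
    | succ n ih => rw [pow_succ, hemul, ih, succ_nsmul]
  have horder : ∀ σ : L ≃ₐ[(RatFunc F)] L, σ ^ p = 1 := by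
    intro σ
    apply heinj
    rw [hepow, he1, nsmul_eq_mul, CharP.cast_eq_zero F p, zero_mul]
  -- group isomorphism
  set E : (L ≃ₐ[(RatFunc F)] L) →* Multiplicative F :=
    { toFun := fun σ => Multiplicative.ofAdd (e σ)
      map_one' := by simp [he1]
      map_mul' := fun σ τ => by simp [hemul] } with hEdef
  have hEbij : Function.Bijective E := by
    rw [Fintype.bijective_iff_injective_and_card]
    constructor
    · intro σ τ h
      apply heinj
      simpa [hEdef] using h
    · rw [← Nat.card_eq_fintype_card, IsGalois.card_aut_eq_finrank, hfinrank]
      rw [Fintype.card_multiplicative, hF]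
  -- F as ZMod p vector space
  haveI : Algebra (ZMod p) F := ZMod.algebra F p
  have hdim : Module.finrank (ZMod p) F = m := by
    have hcard : q = p ^ Module.finrank (ZMod p) F := by
      rw [← hF, Module.card_eq_pow_finrank (K := ZMod p) (V := F), ZMod.card]
    rw [hqdef] at hcard
    exact (Nat.pow_right_injective hp.two_le hcard).symm
  have b : Module.Basis (Fin m) (ZMod p) F := (Module.finBasis (ZMod p) F).reindex (finCongr hdim)
  have ℓ : F ≃ₗ[ZMod p] (Fin m → ZMod p) := b.equivFun
  refine ⟨hgal, hfinrank, horder, ⟨?_⟩⟩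
  exact (MulEquiv.ofBijective E hEbij).trans
    ((AddEquiv.toMultiplicative ℓ.toAddEquiv).trans (MulEquiv.funMultiplicative (Fin m) (ZMod p)))
end

section
/- Let K be a field of characteristic 2, b ∈ K, b ≠ 0, and let x be transcendental over K with t = x⁴(x - b). If z = x + u·x^i with u ∈ K[[x]] a unit and i ≥ 2, then z⁴(z - b) - t = u·x^{4+i} + u⁴·x^{4i}(x - b) + u⁵·x^{5i}, and this element of K((x)) has x-adic valuation exactly 4 + i; in particular z⁴(z - b) ≠ t. -/
open HahnSeries

lemma ofPS_coeff_neg {K : Type} [Field K] (f : PowerSeries K) {n : ℤ} (hn : n < 0) :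
    ((HahnSeries.ofPowerSeries ℤ K) f).coeff n = 0 := by
  rw [HahnSeries.ofPowerSeries_apply]
  apply HahnSeries.embDomain_notin_range
  rintro ⟨m, hm⟩
  simp only [Nat.castOrderEmbedding_apply] at hm
  omega

lemma ofPS_order_nonneg {K : Type} [Field K] (f : PowerSeries K)
    (hf : (HahnSeries.ofPowerSeries ℤ K) f ≠ 0) :
    0 ≤ ((HahnSeries.ofPowerSeries ℤ K) f).order := by
  by_contra h
  exact hf (HahnSeries.coeff_order_eq_zero.mp (ofPS_coeff_neg f (not_le.mp h)))

theorem valuation_of_perturbed_quintic_char_two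
    (K : Type) [Field K] [CharP K 2] (b : K) (hb : b ≠ 0)
    (u : PowerSeries K) (hu : IsUnit u) (i : ℕ) (hi : 2 ≤ i) :
    letI x : LaurentSeries K := (HahnSeries.ofPowerSeries ℤ K) PowerSeries.X
    letI uL : LaurentSeries K := (HahnSeries.ofPowerSeries ℤ K) u
    letI bL : LaurentSeries K := algebraMap K (LaurentSeries K) b
    letI t : LaurentSeries K := x ^ 4 * (x - bL)
    letI z : LaurentSeries K := x + uL * x ^ i
    (z ^ 4 * (z - bL) - t =
        uL * x ^ (4 + i) + uL ^ 4 * x ^ (4 * i) * (x - bL) + uL ^ 5 * x ^ (5 * i)) ∧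
    (z ^ 4 * (z - bL) - t).order = (4 + i : ℤ) ∧
    z ^ 4 * (z - bL) ≠ t := by
  set x : LaurentSeries K := (HahnSeries.ofPowerSeries ℤ K) PowerSeries.X with hxdef
  set uL : LaurentSeries K := (HahnSeries.ofPowerSeries ℤ K) u with huLdef
  set bL : LaurentSeries K := algebraMap K (LaurentSeries K) b with hbLdef
  set t : LaurentSeries K := x ^ 4 * (x - bL) with htdef
  set z : LaurentSeries K := x + uL * x ^ i with hzdef
  -- characteristic 2 transfers
  haveI : CharP (LaurentSeries K) 2 :=
    charP_of_injective_ringHom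
      ((HahnSeries.ofPowerSeries ℤ K).comp (PowerSeries.C)).injective 2
  haveI : Fact (Nat.Prime 2) := ⟨Nat.prime_two⟩
  -- the algebraic identity
  have hz4 : z ^ 4 = x ^ 4 + uL ^ 4 * x ^ (4 * i) := by
    have h2 : ∀ a c : LaurentSeries K, (a + c) ^ 2 = a ^ 2 + c ^ 2 := fun a c => add_pow_char a c 2
    calc z ^ 4 = ((x + uL * x ^ i) ^ 2) ^ 2 := by rw [hzdef]; ring
    _ = (x ^ 2 + (uL * x ^ i) ^ 2) ^ 2 := by rw [h2]
    _ = (x ^ 2) ^ 2 + ((uL * x ^ i) ^ 2) ^ 2 := by rw [h2]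
    _ = x ^ 4 + uL ^ 4 * x ^ (4 * i) := by ring
  have hmain : z ^ 4 * (z - bL) - t =
      uL * x ^ (4 + i) + uL ^ 4 * x ^ (4 * i) * (x - bL) + uL ^ 5 * x ^ (5 * i) := by
    rw [hz4, hzdef, htdef, _root_.pow_add, show 5 * i = 4 * i + i from by ring, _root_.pow_add x (4 * i) i]
    ring
  -- nonzeroness facts
  have hu0 : (PowerSeries.constantCoeff) u ≠ 0 := by
    rcases PowerSeries.isUnit_iff_constantCoeff.mp hu with h
    exact h.ne_zero
  have huL : uL ≠ 0 := by
    intro h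
    apply hu0
    have := HahnSeries.ofPowerSeries_injective (h.trans (map_zero _).symm)
    rw [this]; simp
  have hxne : x ≠ 0 := by
    rw [hxdef, HahnSeries.ofPowerSeries_X]
    exact HahnSeries.single_ne_zero one_ne_zero
  have hordx : x.order = 1 := by
    rw [hxdef, HahnSeries.ofPowerSeries_X]
    exact HahnSeries.order_single one_ne_zero
  have horduL : uL.order = 0 := by
    refine le_antisymm ?_ (ofPS_order_nonneg u huL)
    apply HahnSeries.order_le_of_coeff_ne_zero
    rw [huLdef, show ((0 : ℤ)) = ((0 : ℕ) : ℤ) by simp, HahnSeries.ofPowerSeries_apply_coeff]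
    simpa using hu0
  have hbL' : bL = (HahnSeries.ofPowerSeries ℤ K) (PowerSeries.C b) := by
    rw [hbLdef]
    rw [HahnSeries.algebraMap_apply', PowerSeries.algebraMap_apply]
    simp
  have hxb : x - bL = (HahnSeries.ofPowerSeries ℤ K) (PowerSeries.X - PowerSeries.C b) := by
    rw [map_sub, hxdef, hbL']
  have hxbne : x - bL ≠ 0 := by
    intro h
    apply hb
    have := HahnSeries.ofPowerSeries_injective ((hxb.symm.trans h).trans (map_zero _).symm)
    have h0 := congrArg (PowerSeries.constantCoeff) this
    simpa using h0.symm
  have hordxb : (x - bL).order = 0 := by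
    refine le_antisymm ?_ (by rw [hxb]; exact ofPS_order_nonneg _ (hxb ▸ hxbne))
    apply HahnSeries.order_le_of_coeff_ne_zero
    rw [hxb]
    rw [show ((0 : ℤ)) = ((0 : ℕ) : ℤ) by simp, HahnSeries.ofPowerSeries_apply_coeff]
    simpa using hb
  have hordpow : ∀ n : ℕ, (x ^ n).order = (n : ℤ) := by
    intro n
    rw [HahnSeries.order_pow, hordx]; simp
  -- orders of the three terms
  have hA : (uL * x ^ (4 + i)).order = (4 + i : ℤ) := by
    rw [HahnSeries.order_mul huL (pow_ne_zero _ hxne), horduL, hordpow]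
    push_cast; ring
  have hAne : uL * x ^ (4 + i) ≠ 0 := mul_ne_zero huL (pow_ne_zero _ hxne)
  have hB1ne : uL ^ 4 * x ^ (4 * i) * (x - bL) ≠ 0 :=
    mul_ne_zero (mul_ne_zero (pow_ne_zero _ huL) (pow_ne_zero _ hxne)) hxbne
  have hB2ne : uL ^ 5 * x ^ (5 * i) ≠ 0 :=
    mul_ne_zero (pow_ne_zero _ huL) (pow_ne_zero _ hxne)
  have hB1 : (uL ^ 4 * x ^ (4 * i) * (x - bL)).order = (4 * i : ℤ) := by
    rw [HahnSeries.order_mul (mul_ne_zero (pow_ne_zero _ huL) (pow_ne_zero _ hxne)) hxbne,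
      HahnSeries.order_mul (pow_ne_zero _ huL) (pow_ne_zero _ hxne),
      HahnSeries.order_pow, horduL, hordpow, hordxb]
    push_cast; ring
  have hB2 : (uL ^ 5 * x ^ (5 * i)).order = (5 * i : ℤ) := by
    rw [HahnSeries.order_mul (pow_ne_zero _ huL) (pow_ne_zero _ hxne),
      HahnSeries.order_pow, horduL, hordpow]
    push_cast; ring
  -- orderTop comparison
  have hAtop : (uL * x ^ (4 + i)).orderTop = ((4 + i : ℤ) : WithTop ℤ) := by
    rw [← HahnSeries.order_eq_orderTop_of_ne_zero hAne, hA]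
  have hlt : (uL * x ^ (4 + i)).orderTop <
      (uL ^ 4 * x ^ (4 * i) * (x - bL) + uL ^ 5 * x ^ (5 * i)).orderTop := by
    refine lt_of_lt_of_le ?_ HahnSeries.min_orderTop_le_orderTop_add
    rw [hAtop, ← HahnSeries.order_eq_orderTop_of_ne_zero hB1ne,
      ← HahnSeries.order_eq_orderTop_of_ne_zero hB2ne, hB1, hB2, lt_min_iff]
    constructor <;> · rw [WithTop.coe_lt_coe]; push_cast; omega
  have hSorderTop : (z ^ 4 * (z - bL) - t).orderTop = ((4 + i : ℤ) : WithTop ℤ) := by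
    rw [hmain, add_assoc, HahnSeries.orderTop_add_eq_left hlt, hAtop]
  have hSne : z ^ 4 * (z - bL) - t ≠ 0 := by
    rw [← HahnSeries.orderTop_ne_top, hSorderTop]
    exact WithTop.coe_ne_top
  have hSord : (z ^ 4 * (z - bL) - t).order = (4 + i : ℤ) := by
    have := HahnSeries.order_eq_orderTop_of_ne_zero hSne
    rw [hSorderTop] at this
    exact_mod_cast this
  exact ⟨hmain, hSord, fun h => hSne (by rw [h, sub_self])⟩
end
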